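/- arXiv:1903.03280 — 2 statements merged into one kernel-verified Lean document; each statement's English description precedes it below -/
import Mathlib

section
/- Geometric lemma: For finite point sets X ⊆ Y in R^d and any 0 ≤ r ≤ s, the difference of persistent Betti numbers of the Čech (or Vietoris–Rips) filtration satisfies |β_q^{r,s}(K(Y)) − β_q^{r,s}(K(X))| ≤ Σ_{j=q}^{q+1} |K_j(Y,s) \ K_j(X,s)|, where K_j(P,s) denotes the set of j-simplices in the complex K_s(P). -/
set_option autoImplicit false

open Submodule

/-- An abstract simplicial complex on vertex type `V`: a collection of finite nonempty
subsets closed under taking nonempty subsets. -/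
def IsComplex {V : Type*} (K : Set (Finset V)) : Prop :=
  ∀ σ ∈ K, σ.Nonempty ∧ ∀ τ : Finset V, τ ⊆ σ → τ.Nonempty → τ ∈ K

/-- The space of all `F₂`-chains on the vertex type `V`: the free `F₂`-vector space on
all finite subsets of `V`. -/
abbrev Chain (V : Type*) := Finset V →₀ ZMod 2

/-- The boundary map with `F₂`-coefficients, sending a simplex to the sum of its
codimension-one faces. -/
noncomputable def bdry (V : Type*) : Chain V →ₗ[ZMod 2] Chain V := by
  classical
  exact Finsupp.lsum (ZMod 2) fun σ =>
    LinearMap.toSpanSingleton (ZMod 2) (Chain V) (∑ x ∈ σ, Finsupp.single (σ.erase x) 1)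

/-- `C_q(K)`: the chain group of a complex `K`, the `F₂`-span of its `q`-simplices,
viewed as a subspace of the free `F₂`-vector space on all finite vertex sets. -/
noncomputable def chainGroup {V : Type*} (K : Set (Finset V)) (q : ℕ) :
    Submodule (ZMod 2) (Chain V) :=
  Submodule.span (ZMod 2)
    {c | ∃ σ ∈ K, σ.card = q + 1 ∧ c = Finsupp.single σ (1 : ZMod 2)}

/-- `Z_q(K)`: the cycle group of a complex `K`. -/
noncomputable def cycleGroup {V : Type*} (K : Set (Finset V)) (q : ℕ) :
    Submodule (ZMod 2) (Chain V) :=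
  chainGroup K q ⊓ LinearMap.ker (bdry V)

/-- `B_q(K)`: the boundary group of a complex `K`. -/
noncomputable def boundaryGroup {V : Type*} (K : Set (Finset V)) (q : ℕ) :
    Submodule (ZMod 2) (Chain V) :=
  Submodule.map (bdry V) (chainGroup K (q + 1))

/-- The `(r,s)`-persistent Betti number of a filtration
`Kf`: `dim (Z_q(K_r) / (Z_q(K_r) ∩ B_q(K_s)))`. -/
noncomputable def pBetti {V : Type*} (Kf : ℝ → Set (Finset V)) (q : ℕ) (r s : ℝ) : ℕ :=
  Module.finrank (ZMod 2)
    (↥(cycleGroup (Kf r) q) ⧸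
      (Submodule.comap (cycleGroup (Kf r) q).subtype (boundaryGroup (Kf s) q) :
        Submodule (ZMod 2) ↥(cycleGroup (Kf r) q)))

/-- Points of `ℝ^d`. -/
abbrev Pt (d : ℕ) := EuclideanSpace ℝ (Fin d)

/-- The Čech complex at scale `r` of a set `S ⊆ ℝ^d`: all finite nonempty `σ ⊆ S` whose
closed `r`-balls have a common point. -/
def cechCx (d : ℕ) (r : ℝ) (S : Set (Pt d)) : Set (Finset (Pt d)) :=
  {σ | ↑σ ⊆ S ∧ σ.Nonempty ∧ (⋂ x ∈ (σ : Set (Pt d)), Metric.closedBall x r).Nonempty}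

/-- The Vietoris–Rips complex at scale `r` of a set `S ⊆ ℝ^d`: all finite nonempty
`σ ⊆ S` of diameter at most `r`. -/
def ripsCx (d : ℕ) (r : ℝ) (S : Set (Pt d)) : Set (Finset (Pt d)) :=
  {σ | ↑σ ⊆ S ∧ σ.Nonempty ∧ Metric.diam (σ : Set (Pt d)) ≤ r}

/-- The `(r,s)`-persistent Betti number of the filtration `Kx` (Čech or Rips) built on the
point set `S ⊆ ℝ^d`. -/
noncomputable def pBettiPts {d : ℕ} (Kx : ℝ → Set (Pt d) → Set (Finset (Pt d)))
    (q : ℕ) (r s : ℝ) (S : Set (Pt d)) : ℕ :=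
  pBetti (fun t => Kx t S) q r s

/-!
Let `Z` be the `q`-cycles of `K_r` and `B` the `q`-boundaries of `K_s`, so that
`β = dim Z - dim (Z ⊓ B)`. Passing from `X` to `Y`, `dim Z` grows by at most the number of new
`q`-simplices of `K_r(Y)`, all of which lie in `K_s(Y) \ K_s(X)`, while `Z ⊓ B` only grows: this
bounds `β(Y) - β(X)`. Conversely `dim (Z ⊓ B)` grows by at most the growth of `dim Z` plus that
of `dim B`, and `dim B` grows by at most the number of new `(q+1)`-simplices of `K_s(Y)`: this
bounds `β(X) - β(Y)`. Of the Čech and Rips complexes only two properties are used: they grow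
with the scale, and the complex on a point set consists of the simplices of the complex on the
whole space with vertices in that set.
-/

open Module Submodule

section LinearAlgebra

variable {K V W : Type*} [DivisionRing K] [AddCommGroup V] [Module K V] [AddCommGroup W]
  [Module K W]

-- The induced map `A ⧸ (A ⊓ C) → B ⧸ (B ⊓ C)` is injective.
theorem Submodule.finrank_inf_add_finrank_le_of_le {A B : Submodule K V} (C : Submodule K V)
    (hAB : A ≤ B) [FiniteDimensional K B] :
    finrank K ↥(B ⊓ C) + finrank K A ≤ finrank K B + finrank K ↥(A ⊓ C) := by
  have := finiteDimensional_of_le hAB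
  have : FiniteDimensional K ↥(B ⊓ C) := finiteDimensional_of_le inf_le_left
  have hinf : B ⊓ C ⊓ A = A ⊓ C := by rw [inf_right_comm, inf_eq_right.2 hAB]
  have hsup := finrank_mono (sup_le inf_le_left hAB : B ⊓ C ⊔ A ≤ B)
  have := finrank_sup_add_finrank_inf_eq (B ⊓ C) A
  rw [hinf] at this
  omega

theorem Submodule.finrank_map_add_finrank_inf_ker (f : V →ₗ[K] W) (p : Submodule K V)
    [FiniteDimensional K p] :
    finrank K (p.map f) + finrank K ↥(p ⊓ LinearMap.ker f) = finrank K p := by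
  rw [← (f.comp p.subtype).finrank_range_add_finrank_ker, LinearMap.range_comp,
    range_subtype, LinearMap.ker_comp, ← map_comap_subtype, finrank_map_subtype_eq]

theorem Submodule.finrank_map_add_finrank_le_of_le (f : V →ₗ[K] W) {p p' : Submodule K V}
    (h : p ≤ p') [FiniteDimensional K p'] :
    finrank K (p'.map f) + finrank K p ≤ finrank K (p.map f) + finrank K p' := by
  have := finiteDimensional_of_le h
  have : FiniteDimensional K ↥(p' ⊓ LinearMap.ker f) := finiteDimensional_of_le inf_le_left
  have hker := finrank_mono (inf_le_inf_right (LinearMap.ker f) h)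
  have := finrank_map_add_finrank_inf_ker f p
  have := finrank_map_add_finrank_inf_ker f p'
  omega

theorem Submodule.finrank_quotient_comap_subtype_add_finrank_inf (Z B : Submodule K V)
    [FiniteDimensional K Z] :
    finrank K (Z ⧸ B.comap Z.subtype) + finrank K ↥(Z ⊓ B) = finrank K Z := by
  rw [← map_comap_subtype, finrank_map_subtype_eq]
  exact finrank_quotient_add_finrank _

end LinearAlgebra

section Homology

variable {V : Type*}

theorem chainGroup_mono {K L : Set (Finset V)} (h : K ⊆ L) (q : ℕ) :
    chainGroup K q ≤ chainGroup L q :=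
  span_mono fun _ ⟨σ, hσ, hcard, hc⟩ => ⟨σ, h hσ, hcard, hc⟩

theorem cycleGroup_mono {K L : Set (Finset V)} (h : K ⊆ L) (q : ℕ) :
    cycleGroup K q ≤ cycleGroup L q :=
  inf_le_inf_right _ (chainGroup_mono h q)

theorem boundaryGroup_mono {K L : Set (Finset V)} (h : K ⊆ L) (q : ℕ) :
    boundaryGroup K q ≤ boundaryGroup L q :=
  map_mono (chainGroup_mono h (q + 1))

theorem chainGroup_eq_span_image (K : Set (Finset V)) (q : ℕ) :
    chainGroup K q = span (ZMod 2) ((Finsupp.single · 1) '' {σ | σ ∈ K ∧ σ.card = q + 1}) := by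
  rw [chainGroup]
  congr 1
  ext c
  constructor
  · rintro ⟨σ, hσ, hcard, rfl⟩
    exact ⟨σ, ⟨hσ, hcard⟩, rfl⟩
  · rintro ⟨σ, ⟨hσ, hcard⟩, rfl⟩
    exact ⟨σ, hσ, hcard, rfl⟩

theorem finiteDimensional_chainGroup {K : Set (Finset V)} {q : ℕ}
    (h : {σ | σ ∈ K ∧ σ.card = q + 1}.Finite) :
    FiniteDimensional (ZMod 2) (chainGroup K q) := by
  rw [chainGroup_eq_span_image]
  exact FiniteDimensional.span_of_finite _ (h.image _)

theorem finrank_span_single_image_le_ncard {E : Set (Finset V)} (hE : E.Finite) :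
    finrank (ZMod 2) (span (ZMod 2) ((Finsupp.single · (1 : ZMod 2)) '' E)) ≤ E.ncard := by
  classical
  obtain ⟨E, rfl⟩ := hE.exists_finset_coe
  rw [← Finset.coe_image, Set.ncard_coe_finset]
  exact (finrank_span_finset_le_card _).trans Finset.card_image_le

theorem finrank_chainGroup_le_add_ncard {K K' E : Set (Finset V)} {q : ℕ} (hE : E.Finite)
    (hKE : ∀ σ ∈ K, σ.card = q + 1 → σ ∉ K' → σ ∈ E)
    [FiniteDimensional (ZMod 2) (chainGroup K' q)] :
    finrank (ZMod 2) (chainGroup K q) ≤ finrank (ZMod 2) (chainGroup K' q) + E.ncard := by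
  have : FiniteDimensional (ZMod 2) (span (ZMod 2) ((Finsupp.single · (1 : ZMod 2)) '' E)) :=
    FiniteDimensional.span_of_finite _ (hE.image _)
  have hle : chainGroup K q ≤ chainGroup K' q ⊔ span (ZMod 2) ((Finsupp.single · 1) '' E) := by
    refine span_le.2 ?_
    rintro c ⟨σ, hσ, hcard, rfl⟩
    by_cases hσ' : σ ∈ K'
    · exact mem_sup_left (subset_span ⟨σ, hσ', hcard, rfl⟩)
    · exact mem_sup_right (subset_span ⟨σ, hKE σ hσ hcard hσ', rfl⟩)
  calc finrank (ZMod 2) (chainGroup K q)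
      ≤ finrank (ZMod 2) ↥(chainGroup K' q ⊔ span (ZMod 2) ((Finsupp.single · 1) '' E)) :=
        finrank_mono hle
    _ ≤ finrank (ZMod 2) (chainGroup K' q) +
          finrank (ZMod 2) (span (ZMod 2) ((Finsupp.single · (1 : ZMod 2)) '' E)) :=
        finrank_add_le_finrank_add_finrank _ _
    _ ≤ finrank (ZMod 2) (chainGroup K' q) + E.ncard :=
        Nat.add_le_add_left (finrank_span_single_image_le_ncard hE) _

theorem pBetti_add_finrank_inf (K : ℝ → Set (Finset V)) (q : ℕ) (r s : ℝ)
    [FiniteDimensional (ZMod 2) (cycleGroup (K r) q)] :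
    pBetti K q r s + finrank (ZMod 2) ↥(cycleGroup (K r) q ⊓ boundaryGroup (K s) q) =
      finrank (ZMod 2) (cycleGroup (K r) q) :=
  finrank_quotient_comap_subtype_add_finrank_inf _ _

variable {K L : ℝ → Set (Finset V)} {r s : ℝ}

theorem pBetti_add_finrank_chainGroup_le (hr : K r ⊆ L r) (hs : K s ⊆ L s) (q : ℕ)
    [FiniteDimensional (ZMod 2) (chainGroup (L r) q)] :
    pBetti L q r s + finrank (ZMod 2) (chainGroup (K r) q) ≤
      pBetti K q r s + finrank (ZMod 2) (chainGroup (L r) q) := by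
  have : FiniteDimensional (ZMod 2) (cycleGroup (L r) q) := finiteDimensional_of_le inf_le_left
  have : FiniteDimensional (ZMod 2) (cycleGroup (K r) q) :=
    finiteDimensional_of_le (cycleGroup_mono hr q)
  have : FiniteDimensional (ZMod 2) ↥(cycleGroup (L r) q ⊓ boundaryGroup (L s) q) :=
    finiteDimensional_of_le inf_le_left
  have hZ : finrank (ZMod 2) (cycleGroup (L r) q) + finrank (ZMod 2) (chainGroup (K r) q) ≤
      finrank (ZMod 2) (chainGroup (L r) q) + finrank (ZMod 2) (cycleGroup (K r) q) :=
    finrank_inf_add_finrank_le_of_le _ (chainGroup_mono hr q)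
  have hZB := finrank_mono (inf_le_inf (cycleGroup_mono hr q) (boundaryGroup_mono hs q))
  have := pBetti_add_finrank_inf K q r s
  have := pBetti_add_finrank_inf L q r s
  omega

theorem pBetti_add_finrank_chainGroup_succ_le (hr : K r ⊆ L r) (hs : K s ⊆ L s) (q : ℕ)
    [FiniteDimensional (ZMod 2) (chainGroup (L r) q)]
    [FiniteDimensional (ZMod 2) (chainGroup (L s) (q + 1))] :
    pBetti K q r s + finrank (ZMod 2) (chainGroup (K s) (q + 1)) ≤
      pBetti L q r s + finrank (ZMod 2) (chainGroup (L s) (q + 1)) := by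
  have : FiniteDimensional (ZMod 2) (cycleGroup (L r) q) := finiteDimensional_of_le inf_le_left
  have : FiniteDimensional (ZMod 2) (cycleGroup (K r) q) :=
    finiteDimensional_of_le (cycleGroup_mono hr q)
  have : FiniteDimensional (ZMod 2) (boundaryGroup (L s) q) := Module.Finite.map _ _
  have hB := finrank_map_add_finrank_le_of_le (bdry V) (chainGroup_mono hs (q + 1))
  have hBZ := finrank_inf_add_finrank_le_of_le (cycleGroup (L r) q) (boundaryGroup_mono hs q)
  have hZB := finrank_inf_add_finrank_le_of_le (boundaryGroup (K s) q) (cycleGroup_mono hr q)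
  rw [inf_comm, inf_comm (boundaryGroup (K s) q)] at hBZ
  have := pBetti_add_finrank_inf K q r s
  have := pBetti_add_finrank_inf L q r s
  unfold boundaryGroup at *
  omega

end Homology

structure IsPointCloudFiltration {V : Type*} (Kx : ℝ → Set V → Set (Finset V)) : Prop where
  mono_scale : ∀ S, Monotone fun t => Kx t S
  mem_iff : ∀ t S σ, σ ∈ Kx t S ↔ ↑σ ⊆ S ∧ σ ∈ Kx t Set.univ

namespace IsPointCloudFiltration

variable {V : Type*} {Kx : ℝ → Set V → Set (Finset V)} (hKx : IsPointCloudFiltration Kx)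
include hKx

theorem coe_subset_of_mem {t : ℝ} {S : Set V} {σ : Finset V} (h : σ ∈ Kx t S) : ↑σ ⊆ S :=
  ((hKx.mem_iff t S σ).1 h).1

theorem mono_set (t : ℝ) {S S' : Set V} (hS : S ⊆ S') : Kx t S ⊆ Kx t S' := fun σ h =>
  (hKx.mem_iff t S' σ).2 ⟨(hKx.coe_subset_of_mem h).trans hS, ((hKx.mem_iff t S σ).1 h).2⟩

theorem notMem_of_mem_of_notMem {r : ℝ} {X Y : Set V} {σ : Finset V} (hY : σ ∈ Kx r Y)
    (hX : σ ∉ Kx r X) (s : ℝ) : σ ∉ Kx s X := fun hsX =>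
  hX ((hKx.mem_iff r X σ).2 ⟨hKx.coe_subset_of_mem hsX, ((hKx.mem_iff r Y σ).1 hY).2⟩)

theorem finite_setOf_card_eq (t : ℝ) (P : Finset V) (n : ℕ) :
    {σ | σ ∈ Kx t ↑P ∧ σ.card = n}.Finite :=
  P.powerset.finite_toSet.subset fun _ h =>
    Finset.mem_coe.2 (Finset.mem_powerset.2 (Finset.coe_subset.1 (hKx.coe_subset_of_mem h.1)))

theorem finiteDimensional_chainGroup (t : ℝ) (P : Finset V) (q : ℕ) :
    FiniteDimensional (ZMod 2) (chainGroup (Kx t ↑P) q) :=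
  _root_.finiteDimensional_chainGroup (hKx.finite_setOf_card_eq t P (q + 1))

theorem natAbs_pBetti_sub_le {X Y : Finset V} (hXY : X ⊆ Y) (q : ℕ) {r s : ℝ} (hrs : r ≤ s) :
    ((pBetti (fun t => Kx t ↑Y) q r s : ℤ) - pBetti (fun t => Kx t ↑X) q r s).natAbs ≤
      {σ | σ ∈ Kx s ↑Y ∧ σ ∉ Kx s ↑X ∧ σ.card = q + 1}.ncard +
      {σ | σ ∈ Kx s ↑Y ∧ σ ∉ Kx s ↑X ∧ σ.card = q + 2}.ncard := by
  have := hKx.finiteDimensional_chainGroup r X q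
  have := hKx.finiteDimensional_chainGroup r Y q
  have := hKx.finiteDimensional_chainGroup s X (q + 1)
  have := hKx.finiteDimensional_chainGroup s Y (q + 1)
  have hr := hKx.mono_set r (Finset.coe_subset.2 hXY)
  have hs := hKx.mono_set s (Finset.coe_subset.2 hXY)
  have hC₁ := finrank_chainGroup_le_add_ncard (K := Kx r ↑Y) (K' := Kx r ↑X)
    (E := {σ | σ ∈ Kx s ↑Y ∧ σ ∉ Kx s ↑X ∧ σ.card = q + 1})
    ((hKx.finite_setOf_card_eq s Y (q + 1)).subset fun _ h => ⟨h.1, h.2.2⟩)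
    fun _ hY hcard hX => ⟨hKx.mono_scale Y hrs hY, hKx.notMem_of_mem_of_notMem hY hX s, hcard⟩
  have hC₂ := finrank_chainGroup_le_add_ncard (K' := Kx s ↑X)
    (E := {σ | σ ∈ Kx s ↑Y ∧ σ ∉ Kx s ↑X ∧ σ.card = q + 2})
    ((hKx.finite_setOf_card_eq s Y (q + 2)).subset fun _ h => ⟨h.1, h.2.2⟩)
    fun _ hY hcard hX => ⟨hY, hX, hcard⟩
  have hup := pBetti_add_finrank_chainGroup_le (K := (Kx · ↑X)) (L := (Kx · ↑Y)) hr hs q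
  have hdown := pBetti_add_finrank_chainGroup_succ_le (K := (Kx · ↑X)) (L := (Kx · ↑Y)) hr hs q
  omega

end IsPointCloudFiltration

theorem isPointCloudFiltration_cechCx (d : ℕ) : IsPointCloudFiltration (cechCx d) where
  mono_scale _ _ _ hrs _ := fun ⟨hS, hne, hball⟩ =>
    ⟨hS, hne, hball.mono (Set.iInter₂_mono fun _ _ => Metric.closedBall_subset_closedBall hrs)⟩
  mem_iff _ _ _ := by simp [cechCx]

theorem isPointCloudFiltration_ripsCx (d : ℕ) : IsPointCloudFiltration (ripsCx d) where
  mono_scale _ _ _ hrs _ := fun ⟨hS, hne, hdiam⟩ => ⟨hS, hne, hdiam.trans hrs⟩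
  mem_iff _ _ _ := by simp [ripsCx]

theorem geometric_lemma_general {d : ℕ} (Kx : ℝ → Set (Pt d) → Set (Finset (Pt d)))
    (hKx : Kx = cechCx d ∨ Kx = ripsCx d)
    (X Y : Finset (Pt d)) (hXY : X ⊆ Y) (q : ℕ) (r s : ℝ) (hrs : r ≤ s) :
    ((pBettiPts Kx q r s (↑Y) : ℤ) - (pBettiPts Kx q r s (↑X) : ℤ)).natAbs ≤
      {σ : Finset (Pt d) | σ ∈ Kx s ↑Y ∧ σ ∉ Kx s ↑X ∧ σ.card = q + 1}.ncard +
      {σ : Finset (Pt d) | σ ∈ Kx s ↑Y ∧ σ ∉ Kx s ↑X ∧ σ.card = q + 2}.ncard := by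
  rcases hKx with rfl | rfl
  · exact (isPointCloudFiltration_cechCx d).natAbs_pBetti_sub_le hXY q hrs
  · exact (isPointCloudFiltration_ripsCx d).natAbs_pBetti_sub_le hXY q hrs

/-- **Geometric lemma.** For finite point sets `X ⊆ Y ⊆ ℝ^d` and
`0 ≤ r ≤ s`, the difference of persistent Betti numbers of the Čech (or Vietoris–Rips)
filtration satisfies
`|β_q^{r,s}(K(Y)) − β_q^{r,s}(K(X))| ≤ Σ_{j=q}^{q+1} |K_j(Y,s) \ K_j(X,s)|`,
where `K_j(P,s)` is the set of `j`-simplices of `K_s(P)`. -/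
theorem geometric_lemma {d : ℕ} (Kx : ℝ → Set (Pt d) → Set (Finset (Pt d)))
    (hKx : Kx = cechCx d ∨ Kx = ripsCx d)
    (X Y : Finset (Pt d)) (hXY : X ⊆ Y) (q : ℕ) (r s : ℝ) (hr : 0 ≤ r) (hrs : r ≤ s) :
    ((pBettiPts Kx q r s (↑Y) : ℤ) - (pBettiPts Kx q r s (↑X) : ℤ)).natAbs ≤
      {σ : Finset (Pt d) | σ ∈ Kx s ↑Y ∧ σ ∉ Kx s ↑X ∧ σ.card = q + 1}.ncard +
      {σ : Finset (Pt d) | σ ∈ Kx s ↑Y ∧ σ ∉ Kx s ↑X ∧ σ.card = q + 2}.ncard :=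
  geometric_lemma_general Kx hKx X Y hXY q r s hrs
end

section
/- Bounded quotient of cycle groups on adding points: with K_{r,a} = K_r(P ∩ B(z,a)) and K'_{r,a} = K_r((P ∪ Q) ∩ B(z,a)) (Čech or Rips), Q finite with Q ⊆ B(z,L), the dimension dim(Z_q(K'_{r,a}) / Z_q(K_{r,a})) is bounded, uniformly in a, by the (finite) number of q-simplices of K_r((P ∩ B(z, L + 2μ(r))) ∪ Q) that contain at least one vertex of Q, where μ(r) bounds the diameter of simplices at filtration time r. -/
set_option autoImplicit false

open Submodule

/-!
A `q`-cycle of `K'_{r,a}` whose coefficients vanish on every `q`-simplex of `K'_{r,a}` outside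
`K_{r,a}` is already a cycle of `K_{r,a}`, so the quotient has dimension at most the number of
such simplices. A simplex of `K'_{r,a}` outside `K_{r,a}` has a vertex in `Q ⊆ B(z, L)`, and
since its diameter is at most `μ(r)` all its vertices lie in `(P ∩ B(z, L + 2μ(r))) ∪ Q`, a finite
set because `P` has no accumulation points; this bound does not depend on `a`.
-/

open Set Metric Filter

theorem IsCompact.finite_inter_of_forall_not_accPt {X : Type*} [TopologicalSpace X]
    {K P : Set X} (hK : IsCompact K) (hP : ∀ x, ¬AccPt x (𝓟 P)) : (P ∩ K).Finite := by
  by_contra hinf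
  obtain ⟨x, -, hx⟩ := Set.Infinite.exists_accPt_of_subset_isCompact hinf hK inter_subset_right
  exact hP x (hx.mono (principal_mono.2 inter_subset_left))

universe u

theorem rank_quotient_le_of_ker_le {R : Type*} {M M' : Type u} [Ring R] [AddCommGroup M]
    [Module R M] [AddCommGroup M'] [Module R M'] {N : Submodule R M} (f : M →ₗ[R] M')
    (hf : LinearMap.ker f ≤ N) :
    Module.rank R (M ⧸ N) ≤ Module.rank R M' :=
  calc Module.rank R (M ⧸ N) ≤ Module.rank R (M ⧸ LinearMap.ker f) :=
        LinearMap.rank_le_of_surjective _ (Submodule.factor_surjective hf)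
    _ = Module.rank R (LinearMap.range f) := f.quotKerEquivRange.rank_eq
    _ ≤ Module.rank R M' := Submodule.rank_le _

section Chains

variable {V : Type*}

theorem chainGroup_eq_supported (K : Set (Finset V)) (q : ℕ) :
    chainGroup K q = Finsupp.supported (ZMod 2) (ZMod 2) {σ | σ ∈ K ∧ σ.card = q + 1} := by
  rw [Finsupp.supported_eq_span_single, chainGroup]
  congr 1
  ext c
  simp [eq_comm, and_assoc]

theorem mem_chainGroup_iff {K : Set (Finset V)} {q : ℕ} {c : Chain V} :
    c ∈ chainGroup K q ↔ ∀ σ ∈ c.support, σ ∈ K ∧ σ.card = q + 1 := by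
  rw [chainGroup_eq_supported, Finsupp.mem_supported]
  rfl

theorem rank_cycleGroup_quotient_le_ncard {K K' T : Set (Finset V)} {q : ℕ} (hT : T.Finite)
    (hK'T : ∀ σ ∈ K', σ.card = q + 1 → σ ∉ K → σ ∈ T) :
    Module.rank (ZMod 2) (cycleGroup K' q ⧸
        (Submodule.comap (cycleGroup K' q).subtype (cycleGroup K q) :
          Submodule (ZMod 2) (cycleGroup K' q))) ≤ T.ncard := by
  have := hT.fintype
  let restrict : cycleGroup K' q →ₗ[ZMod 2] (T → ZMod 2) :=
    LinearMap.pi fun σ => (Finsupp.lapply σ.1).comp (cycleGroup K' q).subtype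
  refine (rank_quotient_le_of_ker_le restrict fun ⟨c, hc⟩ hcT => ?_).trans_eq
    (by rw [rank_fun', ← Nat.card_eq_fintype_card, Nat.card_coe_set_eq])
  obtain ⟨hchain, hcycle⟩ := Submodule.mem_inf.1 hc
  refine Submodule.mem_comap.2 (Submodule.mem_inf.2 ⟨mem_chainGroup_iff.2 fun σ hσ => ?_, hcycle⟩)
  obtain ⟨hσK', hcard⟩ := mem_chainGroup_iff.1 hchain σ hσ
  refine ⟨by_contra fun hσK => Finsupp.mem_support_iff.1 hσ ?_, hcard⟩
  exact congrFun (LinearMap.mem_ker.1 hcT) ⟨σ, hK'T σ hσK' hcard hσK⟩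

end Chains

section Geometry

variable {X : Type*} [PseudoMetricSpace X]

/-- The Čech complexes at scale `r` (with `μ = 2r`) and the Rips complexes at scale `r`
(with `μ = r`) are the examples. -/
structure IsLocalOfDiamLE (K : Set X → Set (Finset X)) (μ : ℝ) : Prop where
  mem_iff : ∀ S σ, σ ∈ K S ↔ ↑σ ⊆ S ∧ σ ∈ K univ
  dist_le : ∀ S, ∀ σ ∈ K S, ∀ x ∈ σ, ∀ y ∈ σ, dist x y ≤ μ

namespace IsLocalOfDiamLE

variable {K : Set X → Set (Finset X)} {μ : ℝ} {S S' : Set X} {σ : Finset X}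

theorem subset (hK : IsLocalOfDiamLE K μ) (hσ : σ ∈ K S) : ↑σ ⊆ S :=
  ((hK.mem_iff S σ).1 hσ).1

theorem mono (hK : IsLocalOfDiamLE K μ) (hσ : σ ∈ K S) (hσS' : ↑σ ⊆ S') : σ ∈ K S' :=
  (hK.mem_iff S' σ).2 ⟨hσS', ((hK.mem_iff S σ).1 hσ).2⟩

theorem finite (hK : IsLocalOfDiamLE K μ) (hS : S.Finite) : (K S).Finite :=
  (hS.finite_subsets.preimage Finset.coe_injective.injOn).subset fun _ => hK.subset

theorem inter_nonempty_of_not_mem {P Q A : Set X} (hK : IsLocalOfDiamLE K μ)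
    (hσ : σ ∈ K ((P ∪ Q) ∩ A)) (hσP : σ ∉ K (P ∩ A)) : (Q ∩ ↑σ).Nonempty := by
  by_contra hQσ
  refine hσP (hK.mono hσ fun x hx => ?_)
  obtain ⟨hxP | hxQ, hxA⟩ := hK.subset hσ hx
  exacts [⟨hxP, hxA⟩, hQσ.elim ⟨x, hxQ, hx⟩]

theorem subset_union_of_inter_nonempty {P Q : Set X} {z : X} {L : ℝ} (hK : IsLocalOfDiamLE K μ)
    (hQL : Q ⊆ closedBall z L) (hσ : σ ∈ K S) (hSPQ : S ⊆ P ∪ Q) (hQσ : (Q ∩ ↑σ).Nonempty) :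
    ↑σ ⊆ (P ∩ closedBall z (L + 2 * μ)) ∪ Q := by
  obtain ⟨y, hyQ, hyσ⟩ := hQσ
  have hμ : 0 ≤ μ := (dist_self y).symm.trans_le (hK.dist_le S σ hσ y hyσ y hyσ)
  intro x hx
  refine (hSPQ (hK.subset hσ hx)).imp (fun hxP => ⟨hxP, ?_⟩) id
  calc dist x z ≤ dist x y + dist y z := dist_triangle x y z
    _ ≤ μ + L := add_le_add (hK.dist_le S σ hσ x hx y hyσ) (hQL hyQ)
    _ ≤ L + 2 * μ := by linarith

end IsLocalOfDiamLE

end Geometry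

theorem isLocalOfDiamLE_cechCx (d : ℕ) (r : ℝ) : IsLocalOfDiamLE (cechCx d r) (2 * r) where
  mem_iff S σ := by simp [cechCx]
  dist_le := by
    rintro S σ ⟨-, -, p, hp⟩ x hx y hy
    simp only [mem_iInter] at hp
    calc dist x y ≤ dist p x + dist p y := dist_triangle_left x y p
      _ ≤ r + r := add_le_add (hp x hx) (hp y hy)
      _ = 2 * r := (two_mul r).symm

theorem isLocalOfDiamLE_ripsCx (d : ℕ) (r : ℝ) : IsLocalOfDiamLE (ripsCx d r) r where
  mem_iff S σ := by simp [ripsCx]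
  dist_le := by
    rintro S σ ⟨-, -, hdiam⟩ x hx y hy
    exact (dist_le_diam_of_mem σ.finite_toSet.isBounded hx hy).trans hdiam

theorem cycle_quotient_bounded_general {d : ℕ} (Kx : ℝ → Set (Pt d) → Set (Finset (Pt d)))
    (q : ℕ) (r : ℝ)
    (μr : ℝ) (hKx : (Kx = cechCx d ∧ μr = 2 * r) ∨ (Kx = ripsCx d ∧ μr = r))
    (P Q : Set (Pt d)) (hP : ∀ x : Pt d, ¬ AccPt x (Filter.principal P))
    (hQfin : Q.Finite) (z : Pt d) (L : ℝ) (hQL : Q ⊆ Metric.closedBall z L) :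
    ({σ : Finset (Pt d) | σ ∈ Kx r ((P ∩ Metric.closedBall z (L + 2 * μr)) ∪ Q) ∧
        σ.card = q + 1 ∧ (Q ∩ ↑σ).Nonempty}).Finite ∧
    ∀ a : ℝ,
      Module.rank (ZMod 2)
          (↥(cycleGroup (Kx r ((P ∪ Q) ∩ Metric.closedBall z a)) q) ⧸
            (Submodule.comap
                (cycleGroup (Kx r ((P ∪ Q) ∩ Metric.closedBall z a)) q).subtype
                (cycleGroup (Kx r (P ∩ Metric.closedBall z a)) q) :
              Submodule (ZMod 2)
                ↥(cycleGroup (Kx r ((P ∪ Q) ∩ Metric.closedBall z a)) q))) ≤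
        (({σ : Finset (Pt d) | σ ∈ Kx r ((P ∩ Metric.closedBall z (L + 2 * μr)) ∪ Q) ∧
            σ.card = q + 1 ∧ (Q ∩ ↑σ).Nonempty}).ncard : Cardinal) := by
  have hK : IsLocalOfDiamLE (Kx r) μr := by
    rcases hKx with ⟨rfl, rfl⟩ | ⟨rfl, rfl⟩
    exacts [isLocalOfDiamLE_cechCx d r, isLocalOfDiamLE_ripsCx d _]
  have hvertices : ((P ∩ closedBall z (L + 2 * μr)) ∪ Q).Finite :=
    ((isCompact_closedBall z _).finite_inter_of_forall_not_accPt hP).union hQfin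
  have hfinite : {σ | σ ∈ Kx r ((P ∩ closedBall z (L + 2 * μr)) ∪ Q) ∧ σ.card = q + 1 ∧
      (Q ∩ ↑σ).Nonempty}.Finite :=
    (hK.finite hvertices).subset fun σ hσ => hσ.1
  refine ⟨hfinite, fun a => rank_cycleGroup_quotient_le_ncard hfinite fun σ hσ hcard hσP => ?_⟩
  have hQσ := hK.inter_nonempty_of_not_mem hσ hσP
  have hσX := hK.subset_union_of_inter_nonempty hQL hσ inter_subset_left hQσ
  exact ⟨hK.mono hσ hσX, hcard, hQσ⟩

/-- Bounded quotient of cycle groups on adding points: with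
`K_{r,a} = K_r(P ∩ B(z,a))` and `K'_{r,a} = K_r((P ∪ Q) ∩ B(z,a))` (Čech or Rips),
`Q` finite with `Q ⊆ B(z,L)`, the dimension `dim (Z_q(K'_{r,a})/Z_q(K_{r,a}))` is
bounded, uniformly in `a`, by the (finite) number of `q`-simplices of
`K_r((P ∩ B(z, L + 2μ(r))) ∪ Q)` containing at least one vertex of `Q`, where `μ(r)`
bounds the diameter of simplices at filtration time `r`. -/
theorem cycle_quotient_bounded {d : ℕ} (Kx : ℝ → Set (Pt d) → Set (Finset (Pt d)))
    (q : ℕ) (r : ℝ) (hr : 0 ≤ r)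
    (μr : ℝ) (hKx : (Kx = cechCx d ∧ μr = 2 * r) ∨ (Kx = ripsCx d ∧ μr = r))
    (P Q : Set (Pt d)) (hP : ∀ x : Pt d, ¬ AccPt x (Filter.principal P))
    (hQfin : Q.Finite) (z : Pt d) (L : ℝ) (hL : 0 ≤ L) (hQL : Q ⊆ Metric.closedBall z L) :
    ({σ : Finset (Pt d) | σ ∈ Kx r ((P ∩ Metric.closedBall z (L + 2 * μr)) ∪ Q) ∧
        σ.card = q + 1 ∧ (Q ∩ ↑σ).Nonempty}).Finite ∧
    ∀ a : ℝ,
      Module.rank (ZMod 2)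
          (↥(cycleGroup (Kx r ((P ∪ Q) ∩ Metric.closedBall z a)) q) ⧸
            (Submodule.comap
                (cycleGroup (Kx r ((P ∪ Q) ∩ Metric.closedBall z a)) q).subtype
                (cycleGroup (Kx r (P ∩ Metric.closedBall z a)) q) :
              Submodule (ZMod 2)
                ↥(cycleGroup (Kx r ((P ∪ Q) ∩ Metric.closedBall z a)) q))) ≤
        (({σ : Finset (Pt d) | σ ∈ Kx r ((P ∩ Metric.closedBall z (L + 2 * μr)) ∪ Q) ∧
            σ.card = q + 1 ∧ (Q ∩ ↑σ).Nonempty}).ncard : Cardinal) :=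
  cycle_quotient_bounded_general Kx q r μr hKx P Q hP hQfin z L hQL
end
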